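/- arXiv:2407.12039 — 4 statements merged into one kernel-verified Lean document; each statement's English description precedes it below -/
import Mathlib

section
/- Let a = (a₁,a₂,a₃,a₄) ∈ ℝ⁴ and φ = (φ₁,φ₂,φ₃,φ₄) ∈ ℝ⁴, and suppose the phases satisfy φ₃ − φ₁ = m/2 and φ₄ − φ₂ = n/2 for some integers m, n. Then for all (x₁,x₂) ∈ ℝ², det H(x₁,x₂) = (a₁a₄ − (−1)^{m+n} a₂a₃) · sin(2π(x₁+φ₁)) · sin(2π(x₂+φ₄)). -/
/-- The rescaled Jacobian `H` of the nonlinearity of the 2D torus map. -/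
noncomputable def Hmat (a₁ a₂ a₃ a₄ φ₁ φ₂ φ₃ φ₄ x₁ x₂ : ℝ) : Matrix (Fin 2) (Fin 2) ℝ :=
  -!![a₁ * Real.sin (2 * Real.pi * (x₁ + φ₁)), a₂ * Real.sin (2 * Real.pi * (x₂ + φ₂));
      a₃ * Real.sin (2 * Real.pi * (x₁ + φ₃)), a₄ * Real.sin (2 * Real.pi * (x₂ + φ₄))]

/-- When the phase differences are half-integers, `det H` factors. -/
theorem detH_half_integer_phases (a₁ a₂ a₃ a₄ φ₁ φ₂ φ₃ φ₄ : ℝ) (m n : ℤ)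
    (h31 : φ₃ - φ₁ = (m : ℝ) / 2) (h42 : φ₄ - φ₂ = (n : ℝ) / 2) :
    ∀ x₁ x₂ : ℝ,
      (Hmat a₁ a₂ a₃ a₄ φ₁ φ₂ φ₃ φ₄ x₁ x₂).det
        = (a₁ * a₄ - (-1 : ℝ) ^ (m + n) * (a₂ * a₃))
            * Real.sin (2 * Real.pi * (x₁ + φ₁)) * Real.sin (2 * Real.pi * (x₂ + φ₄)) := by
  intro x₁ x₂
  have hφ₃ : φ₃ = φ₁ + (m : ℝ) / 2 := by linarith
  have hφ₂ : φ₂ = φ₄ - (n : ℝ) / 2 := by linarith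
  have e3 : Real.sin (2 * Real.pi * (x₁ + φ₃))
      = (-1 : ℝ) ^ m * Real.sin (2 * Real.pi * (x₁ + φ₁)) := by
    rw [hφ₃, show 2 * Real.pi * (x₁ + (φ₁ + (m : ℝ) / 2))
        = 2 * Real.pi * (x₁ + φ₁) + (m : ℝ) * Real.pi by ring,
      Real.sin_add_int_mul_pi]
  have e2 : Real.sin (2 * Real.pi * (x₂ + φ₂))
      = (-1 : ℝ) ^ (-n) * Real.sin (2 * Real.pi * (x₂ + φ₄)) := by
    rw [hφ₂, show 2 * Real.pi * (x₂ + (φ₄ - (n : ℝ) / 2))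
        = 2 * Real.pi * (x₂ + φ₄) + ((-n : ℤ) : ℝ) * Real.pi by push_cast; ring,
      Real.sin_add_int_mul_pi]
  rw [Hmat, Matrix.det_neg, e2, e3, Matrix.det_fin_two_of]
  simp only [Fintype.card_fin]
  have key : (-1 : ℝ) ^ m * (-1 : ℝ) ^ (-n) = (-1 : ℝ) ^ (m + n) := by
    rw [← zpow_add₀ (by norm_num : (-1:ℝ) ≠ 0),
      show m + -n = (m + n) + 2 * (-n) by ring,
      zpow_add₀ (by norm_num : (-1:ℝ) ≠ 0), zpow_mul]
    norm_num
  linear_combination (-(a₂ * a₃ * Real.sin (2 * Real.pi * (x₁ + φ₁)) * Real.sin (2 * Real.pi * (x₂ + φ₄)))) * key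
end

section
/- Let a = (a₁,a₂,a₃,a₄) ∈ ℝ⁴ and φ = (φ₁,φ₂,φ₃,φ₄) ∈ ℝ⁴, and suppose it is NOT the case that a₁ = 0, a₄ = 0, and a₂·a₃ = 0. Then there exist ε > 0 and x ∈ ℝ² such that det(1 + ε • H(x)) < 0, where 1 is the 2×2 identity matrix. In particular the set {ε ≥ 0 : there exists x ∈ ℝ² with det(1 + ε • H(x)) ≤ 0} is nonempty. -/
lemma sin_zero_pt (φ : ℝ) : Real.sin (2 * Real.pi * ((-φ) + φ)) = 0 := by
  norm_num

lemma sin_one_pt (φ : ℝ) : Real.sin (2 * Real.pi * ((1/4 - φ) + φ)) = 1 := by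
  have : 2 * Real.pi * ((1/4 - φ) + φ) = Real.pi / 2 := by ring
  rw [this, Real.sin_pi_div_two]

lemma sin_negone_pt (φ : ℝ) : Real.sin (2 * Real.pi * ((-(1/4) - φ) + φ)) = -1 := by
  have : 2 * Real.pi * ((-(1/4) - φ) + φ) = -(Real.pi / 2) := by ring
  rw [this, Real.sin_neg, Real.sin_pi_div_two]

/-- A point where `a * sin (2π(x+φ)) = |a|`. -/
lemma exists_sin_abs (a φ : ℝ) : ∃ x : ℝ, a * Real.sin (2 * Real.pi * (x + φ)) = |a| := by
  rcases le_or_gt 0 a with h | h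
  · exact ⟨1/4 - φ, by rw [sin_one_pt, mul_one, abs_of_nonneg h]⟩
  · exact ⟨-(1/4) - φ, by rw [sin_negone_pt, abs_of_neg h]; ring⟩

/-- A point where `a * sin (2π(x+φ)) = -|a|`. -/
lemma exists_sin_neg_abs (a φ : ℝ) : ∃ x : ℝ, a * Real.sin (2 * Real.pi * (x + φ)) = -|a| := by
  rcases le_or_gt 0 a with h | h
  · exact ⟨-(1/4) - φ, by rw [sin_negone_pt, abs_of_nonneg h]; ring_nf⟩
  · exact ⟨1/4 - φ, by rw [sin_one_pt, mul_one, abs_of_neg h, neg_neg]⟩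

/-- Unless `a₁ = a₄ = 0` and `a₂ a₃ = 0`, the Jacobian `1 + ε H` becomes
singular (indeed orientation-reversing) for some `ε > 0` and some point. -/
theorem jacobian_becomes_singular (a₁ a₂ a₃ a₄ φ₁ φ₂ φ₃ φ₄ : ℝ)
    (ha : ¬(a₁ = 0 ∧ a₄ = 0 ∧ a₂ * a₃ = 0)) :
    (∃ ε : ℝ, 0 < ε ∧ ∃ x₁ x₂ : ℝ,
      ((1 : Matrix (Fin 2) (Fin 2) ℝ) + ε • Hmat a₁ a₂ a₃ a₄ φ₁ φ₂ φ₃ φ₄ x₁ x₂).det < 0) ∧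
    {ε : ℝ | 0 ≤ ε ∧ ∃ x₁ x₂ : ℝ,
      ((1 : Matrix (Fin 2) (Fin 2) ℝ) + ε • Hmat a₁ a₂ a₃ a₄ φ₁ φ₂ φ₃ φ₄ x₁ x₂).det ≤ 0}.Nonempty := by
  have key : ∀ ε x₁ x₂ : ℝ,
      ((1 : Matrix (Fin 2) (Fin 2) ℝ) + ε • Hmat a₁ a₂ a₃ a₄ φ₁ φ₂ φ₃ φ₄ x₁ x₂).det =
      (1 - ε * (a₁ * Real.sin (2 * Real.pi * (x₁ + φ₁)))) *
        (1 - ε * (a₄ * Real.sin (2 * Real.pi * (x₂ + φ₄)))) -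
      (ε * (a₂ * Real.sin (2 * Real.pi * (x₂ + φ₂)))) *
        (ε * (a₃ * Real.sin (2 * Real.pi * (x₁ + φ₃)))) := by
    intro ε x₁ x₂
    simp [Hmat, Matrix.det_fin_two, Matrix.one_apply]
    ring
  have main : ∃ ε : ℝ, 0 < ε ∧ ∃ x₁ x₂ : ℝ,
      ((1 : Matrix (Fin 2) (Fin 2) ℝ) + ε • Hmat a₁ a₂ a₃ a₄ φ₁ φ₂ φ₃ φ₄ x₁ x₂).det < 0 := by
    by_cases h1 : a₁ = 0
    · by_cases h4 : a₄ = 0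
      · -- a₂ a₃ ≠ 0
        have h23 : a₂ * a₃ ≠ 0 := fun h => ha ⟨h1, h4, h⟩
        obtain ⟨x₂, hx₂⟩ := exists_sin_abs a₂ φ₂
        obtain ⟨x₁, hx₁⟩ := exists_sin_abs a₃ φ₃
        refine ⟨Real.sqrt (2 / (|a₂| * |a₃|)), ?_, x₁, x₂, ?_⟩
        · apply Real.sqrt_pos.mpr
          have : 0 < |a₂| * |a₃| := by
            rw [← abs_mul]; exact abs_pos.mpr h23
          positivity
        · rw [key, h1, h4, hx₁, hx₂]
          have h2 : 0 < |a₂| * |a₃| := by rw [← abs_mul]; exact abs_pos.mpr h23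
          have hs : Real.sqrt (2 / (|a₂| * |a₃|)) * Real.sqrt (2 / (|a₂| * |a₃|))
              = 2 / (|a₂| * |a₃|) := Real.mul_self_sqrt (by positivity)
          have hc : 2 / (|a₂| * |a₃|) * (|a₂| * |a₃|) = 2 :=
            div_mul_cancel₀ _ (ne_of_gt h2)
          nlinarith [hs, hc]
      · -- a₁ = 0, a₄ ≠ 0 : kill S₃, maximize a₄ S₄
        obtain ⟨x₂, hx₂⟩ := exists_sin_abs a₄ φ₄
        refine ⟨2 / |a₄|, by positivity, -φ₃, x₂, ?_⟩
        rw [key, h1, hx₂, sin_zero_pt]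
        have h4' : (0:ℝ) < |a₄| := abs_pos.mpr h4
        rw [div_mul_cancel₀ _ (ne_of_gt h4')]
        norm_num
    · -- a₁ ≠ 0 : kill S₂ with x₂ = -φ₂
      set d := a₄ * Real.sin (2 * Real.pi * ((-φ₂) + φ₄)) with hd
      have h1' : (0:ℝ) < |a₁| := abs_pos.mpr h1
      rcases le_or_gt d 0 with hdle | hdpos
      · obtain ⟨x₁, hx₁⟩ := exists_sin_abs a₁ φ₁
        refine ⟨2 / |a₁|, by positivity, x₁, -φ₂, ?_⟩
        rw [key, hx₁, sin_zero_pt, ← hd, div_mul_cancel₀ _ (ne_of_gt h1')]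
        have hεd : 2 / |a₁| * d ≤ 0 := mul_nonpos_of_nonneg_of_nonpos (by positivity) hdle
        nlinarith
      · obtain ⟨x₁, hx₁⟩ := exists_sin_neg_abs a₁ φ₁
        refine ⟨2 / d, by positivity, x₁, -φ₂, ?_⟩
        rw [key, hx₁, sin_zero_pt, ← hd, div_mul_cancel₀ _ (ne_of_gt hdpos)]
        have : 0 ≤ 2 / d * |a₁| := by positivity
        nlinarith
  refine ⟨main, ?_⟩
  obtain ⟨ε, hε, x₁, x₂, h⟩ := main
  exact ⟨ε, hε.le, x₁, x₂, h.le⟩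
end

section
/- Fix u with 0 < u < 1 and arbitrary phases φ ∈ ℝ⁴, and let the amplitudes be a = (0, 1−u, u, 0) (the anti-coupled case). Then ε_crit(a,φ) = inf {ε ≥ 0 : ∃ x ∈ ℝ², det(1 + ε • H(x)) ≤ 0} = (u(1−u))^{−1/2}. -/
/-- In the anti-coupled case `a = (0, 1-u, u, 0)` with `0 < u < 1`,
the critical amplitude is `(u(1-u))^{-1/2}`. -/
theorem epsCrit_anticoupled (u φ₁ φ₂ φ₃ φ₄ : ℝ) (hu0 : 0 < u) (hu1 : u < 1) :
    sInf {ε : ℝ | 0 ≤ ε ∧ ∃ x₁ x₂ : ℝ,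
        ((1 : Matrix (Fin 2) (Fin 2) ℝ) + ε • Hmat 0 (1 - u) u 0 φ₁ φ₂ φ₃ φ₄ x₁ x₂).det ≤ 0}
      = (Real.sqrt (u * (1 - u)))⁻¹ := by
  have hp : 0 < u * (1 - u) := mul_pos hu0 (by linarith)
  set p := u * (1 - u) with hpdef
  have hsp : 0 < Real.sqrt p := Real.sqrt_pos.mpr hp
  set c := (Real.sqrt p)⁻¹ with hc
  have hcpos : 0 < c := inv_pos.mpr hsp
  have hc2 : c ^ 2 * p = 1 := by
    rw [hc, inv_pow, Real.sq_sqrt hp.le]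
    exact inv_mul_cancel₀ hp.ne'
  have hkey : ∀ ε x₁ x₂ : ℝ,
      ((1 : Matrix (Fin 2) (Fin 2) ℝ) + ε • Hmat 0 (1 - u) u 0 φ₁ φ₂ φ₃ φ₄ x₁ x₂).det
      = 1 - ε ^ 2 * p *
        (Real.sin (2 * Real.pi * (x₂ + φ₂)) * Real.sin (2 * Real.pi * (x₁ + φ₃))) := by
    intro ε x₁ x₂
    simp [Hmat, Matrix.det_fin_two, Matrix.one_apply]
    ring
  have hset : {ε : ℝ | 0 ≤ ε ∧ ∃ x₁ x₂ : ℝ,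
      ((1 : Matrix (Fin 2) (Fin 2) ℝ) + ε • Hmat 0 (1 - u) u 0 φ₁ φ₂ φ₃ φ₄ x₁ x₂).det ≤ 0}
      = Set.Ici c := by
    ext ε
    simp only [Set.mem_setOf_eq, Set.mem_Ici]
    constructor
    · rintro ⟨hε, x₁, x₂, hdet⟩
      rw [hkey] at hdet
      set s₂ := Real.sin (2 * Real.pi * (x₂ + φ₂))
      set s₃ := Real.sin (2 * Real.pi * (x₁ + φ₃))
      have h2 : s₂ * s₃ ≤ 1 := by
        calc s₂ * s₃ ≤ |s₂ * s₃| := le_abs_self _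
          _ = |s₂| * |s₃| := abs_mul _ _
          _ ≤ 1 * 1 := mul_le_mul
                (abs_le.mpr ⟨Real.neg_one_le_sin _, Real.sin_le_one _⟩)
                (abs_le.mpr ⟨Real.neg_one_le_sin _, Real.sin_le_one _⟩)
                (abs_nonneg _) zero_le_one
          _ = 1 := one_mul 1
      have hnn : (0:ℝ) ≤ ε ^ 2 * p := by positivity
      have hε2p : 1 ≤ ε ^ 2 * p := by
        nlinarith [mul_le_mul_of_nonneg_left h2 hnn]
      by_contra h
      push_neg at h
      have h1 : ε ^ 2 < c ^ 2 := by nlinarith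
      have h2' : ε ^ 2 * p < c ^ 2 * p := mul_lt_mul_of_pos_right h1 hp
      linarith
    · intro hε
      refine ⟨le_trans hcpos.le hε, 1/4 - φ₃, 1/4 - φ₂, ?_⟩
      rw [hkey]
      have e2 : Real.sin (2 * Real.pi * ((1/4 - φ₂) + φ₂)) = 1 := by
        rw [show 2 * Real.pi * ((1/4 - φ₂) + φ₂) = Real.pi / 2 by ring]
        exact Real.sin_pi_div_two
      have e3 : Real.sin (2 * Real.pi * ((1/4 - φ₃) + φ₃)) = 1 := by
        rw [show 2 * Real.pi * ((1/4 - φ₃) + φ₃) = Real.pi / 2 by ring]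
        exact Real.sin_pi_div_two
      rw [e2, e3]
      have h1 : c ^ 2 ≤ ε ^ 2 := by nlinarith
      nlinarith [mul_le_mul_of_nonneg_right h1 hp.le]
  rw [hset, csInf_Ici]
end

section
/- Fix u with 0 ≤ u < 1 and arbitrary phases φ ∈ ℝ⁴, and let the amplitudes be a = (0, u, 0, 1−u) (the semidirect-product case, in which the second component of the torus map is autonomous and drives the first). Then ε_crit(a,φ) = inf {ε ≥ 0 : ∃ x ∈ ℝ², det(1 + ε • H(x)) ≤ 0} = 1/(1−u). -/
lemma det_semidirect (u φ₁ φ₂ φ₃ φ₄ ε x₁ x₂ : ℝ) :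
    ((1 : Matrix (Fin 2) (Fin 2) ℝ) + ε • Hmat 0 u 0 (1 - u) φ₁ φ₂ φ₃ φ₄ x₁ x₂).det
      = 1 - ε * (1 - u) * Real.sin (2 * Real.pi * (x₂ + φ₄)) := by
  simp [Hmat, Matrix.det_fin_two, Matrix.smul_apply, Matrix.one_apply]
  ring

/-- In the semidirect-product case `a = (0, u, 0, 1-u)` with `0 ≤ u < 1`,
the critical amplitude is `1/(1-u)`. -/
theorem epsCrit_semidirect (u φ₁ φ₂ φ₃ φ₄ : ℝ) (hu0 : 0 ≤ u) (hu1 : u < 1) :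
    sInf {ε : ℝ | 0 ≤ ε ∧ ∃ x₁ x₂ : ℝ,
        ((1 : Matrix (Fin 2) (Fin 2) ℝ) + ε • Hmat 0 u 0 (1 - u) φ₁ φ₂ φ₃ φ₄ x₁ x₂).det ≤ 0}
      = 1 / (1 - u) := by
  have h1u : 0 < 1 - u := by linarith
  have hmem : (1 / (1 - u)) ∈ {ε : ℝ | 0 ≤ ε ∧ ∃ x₁ x₂ : ℝ,
      ((1 : Matrix (Fin 2) (Fin 2) ℝ) + ε • Hmat 0 u 0 (1 - u) φ₁ φ₂ φ₃ φ₄ x₁ x₂).det ≤ 0} := by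
    refine ⟨by positivity, 0, 1/4 - φ₄, ?_⟩
    rw [det_semidirect]
    have : 2 * Real.pi * (1/4 - φ₄ + φ₄) = Real.pi / 2 := by ring
    rw [this, Real.sin_pi_div_two]
    have : 1 / (1 - u) * (1 - u) = 1 := by field_simp
    rw [mul_one, this]
    linarith
  apply le_antisymm
  · exact csInf_le ⟨0, fun ε hε => hε.1⟩ hmem
  · apply le_csInf ⟨_, hmem⟩
    rintro ε ⟨hε0, x₁, x₂, hdet⟩
    rw [det_semidirect] at hdet
    have hs : Real.sin (2 * Real.pi * (x₂ + φ₄)) ≤ 1 := Real.sin_le_one _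
    have : 1 ≤ ε * (1 - u) := by nlinarith [mul_nonneg (mul_nonneg hε0 h1u.le) (sub_nonneg.2 hs)]
    rw [div_le_iff₀ h1u]
    linarith
end
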